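/- For every natural number i > 0, f(2 / (3^i + 1)) = 2^(i-1) / (3^i - 2^(i-1)). -/

import Mathlib

/-!
The self-similarity `f (x / 3) = (2/3) f x` iterates to `f (x / 3^j) = (2/3)^j f x`.
The point `y = 2 / (3^(j+1) + 1)` is chosen so that `(2 - y) / 3 = 3^j y`; chaining the
second functional equation with the iterated first one gives the linear equation
`f y = (2/3)^j · (1/3) · (1 + f y)`, whose solution is `2^j / (3^(j+1) - 2^j)`.
-/

open Set

lemma map_div_three_pow {f : ℝ → ℝ}
    (hw1 : ∀ x ∈ Icc (0:ℝ) 1, f (x / 3) = (2/3) * f x) (k : ℕ) :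
    ∀ x ∈ Icc (0:ℝ) 1, f (x / 3 ^ k) = (2/3) ^ k * f x := by
  induction k with
  | zero => simp
  | succ k ih =>
    intro x hx
    have hx3 : x / 3 ∈ Icc (0:ℝ) 1 := ⟨by linarith [hx.1], by linarith [hx.2]⟩
    rw [pow_succ', ← div_div, ih _ hx3, hw1 x hx, pow_succ']
    ring

lemma eq_of_two_sub_div_three_eq {f : ℝ → ℝ}
    (hw1 : ∀ x ∈ Icc (0:ℝ) 1, f (x / 3) = (2/3) * f x)
    (hw2 : ∀ x ∈ Icc (0:ℝ) 1, f ((2 - x) / 3) = (1/3) * (1 + f x))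
    {j : ℕ} {y : ℝ} (hy : y ∈ Icc (0:ℝ) 1) (hfix : (2 - y) / 3 = 3 ^ j * y) :
    f y = 2 ^ j / (3 ^ (j + 1) - 2 ^ j) := by
  have hz : (2 - y) / 3 ∈ Icc (0:ℝ) 1 := ⟨by linarith [hy.2], by linarith [hy.1]⟩
  have hzy : (2 - y) / 3 / 3 ^ j = y := by rw [hfix]; field_simp
  have hlin : f y = (2/3) ^ j * ((1/3) * (1 + f y)) := by
    rw [← hw2 y hy, ← map_div_three_pow hw1 j _ hz, hzy]
  have hlt : (2:ℝ) ^ j < 3 ^ (j + 1) :=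
    (pow_le_pow_left₀ (by norm_num) (by norm_num) j).trans_lt
      (pow_lt_pow_right₀ (by norm_num) j.lt_succ_self)
  rw [eq_div_iff (sub_ne_zero.mpr hlt.ne')]
  rw [div_pow] at hlin
  field_simp at hlin
  rw [pow_succ]
  linarith

theorem bourbaki_stmt_general (f : ℝ → ℝ)
    (hw1 : ∀ x ∈ Set.Icc (0:ℝ) 1, f (x / 3) = (2/3) * f x)
    (hw2 : ∀ x ∈ Set.Icc (0:ℝ) 1, f ((2 - x) / 3) = (1/3) * (1 + f x)) :
    ∀ i : ℕ, 0 < i → f (2 / (3 ^ i + 1)) = 2 ^ (i - 1) / (3 ^ i - 2 ^ (i - 1)) := by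
  intro i hi
  obtain ⟨j, rfl⟩ := Nat.exists_eq_add_of_lt hi
  have hden : (0:ℝ) < 3 ^ (j + 1) + 1 := by positivity
  have hy : 2 / (3 ^ (j + 1) + 1) ∈ Icc (0:ℝ) 1 := by
    refine ⟨by positivity, (div_le_one hden).mpr ?_⟩
    linarith [one_le_pow₀ (M₀ := ℝ) (a := 3) (by norm_num) (n := j + 1)]
  have hfix : (2 - 2 / (3 ^ (j + 1) + 1)) / 3 = (3:ℝ) ^ j * (2 / (3 ^ (j + 1) + 1)) := by
    field_simp
    ring
  simpa using eq_of_two_sub_div_three_eq hw1 hw2 hy hfix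

theorem bourbaki_stmt (f : ℝ → ℝ)
    (hcont : ContinuousOn f (Set.Icc 0 1))
    (h0 : f 0 = 0) (h1 : f 1 = 1)
    (hw1 : ∀ x ∈ Set.Icc (0:ℝ) 1, f (x / 3) = (2/3) * f x)
    (hw2 : ∀ x ∈ Set.Icc (0:ℝ) 1, f ((2 - x) / 3) = (1/3) * (1 + f x))
    (hw3 : ∀ x ∈ Set.Icc (0:ℝ) 1, f ((2 + x) / 3) = 1/3 + (2/3) * f x) :
    ∀ i : ℕ, 0 < i → f (2 / (3 ^ i + 1)) = 2 ^ (i - 1) / (3 ^ i - 2 ^ (i - 1)) :=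
  bourbaki_stmt_general f hw1 hw2
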